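/- Let A and B be n×n real positive definite matrices whose diagonal entries are all equal to 1. Then the condition number of the Hadamard product satisfies κ(A*B) ≤ κ(B), where κ(M) = σ_max(M)/σ_min(M). -/

import Mathlib

/-!
Let `λ` and `μ` be the smallest and largest eigenvalues of `B`, so that `λ • 1 ≤ B ≤ μ • 1` in the
Loewner order. By the Schur product theorem, Hadamard multiplication by the positive semidefinite
`A` is monotone, and it fixes scalar matrices because `A` has unit diagonal; hence
`λ • 1 ≤ A ⊙ B ≤ μ • 1`. Consequently `λ ≤ ‖(A ⊙ B) x‖ ≤ μ` on unit vectors, while the extremal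
eigenvectors of `B` show `σ_min(B) ≤ λ` and `μ ≤ σ_max(B)`.
-/

open scoped BigOperators
open MeasureTheory ProbabilityTheory Matrix

noncomputable def enorm {n : ℕ} (v : Fin n → ℝ) : ℝ :=
  ‖(WithLp.equiv 2 (Fin n → ℝ)).symm v‖

noncomputable def sMax {m n : ℕ} (A : Matrix (Fin m) (Fin n) ℝ) : ℝ :=
  ⨆ x : {x : Fin n → ℝ // _root_.enorm x = 1}, _root_.enorm (A.mulVec x.1)

noncomputable def sMin {m n : ℕ} (A : Matrix (Fin m) (Fin n) ℝ) : ℝ :=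
  ⨅ x : {x : Fin n → ℝ // _root_.enorm x = 1}, _root_.enorm (A.mulVec x.1)

open scoped MatrixOrder ComplexOrder RealInnerProductSpace

section InnerProductSpace

variable {E : Type*} [NormedAddCommGroup E] [InnerProductSpace ℝ E]

lemma ContinuousLinearMap.mul_norm_le_norm_apply {T : E →L[ℝ] E} {a : ℝ}
    (h : ∀ x, a * ‖x‖ ^ 2 ≤ ⟪x, T x⟫) (x : E) : a * ‖x‖ ≤ ‖T x‖ := by
  rcases eq_or_ne x 0 with rfl | hx
  · simp
  refine le_of_mul_le_mul_right ?_ (norm_pos_iff.mpr hx)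
  calc a * ‖x‖ * ‖x‖ = a * ‖x‖ ^ 2 := by ring
    _ ≤ ⟪x, T x⟫ := h x
    _ ≤ ‖x‖ * ‖T x‖ := real_inner_le_norm x (T x)
    _ = ‖T x‖ * ‖x‖ := mul_comm _ _

lemma ContinuousLinearMap.opNorm_le_of_abs_inner_le {T : E →L[ℝ] E}
    (hT : (T : E →ₗ[ℝ] E).IsSymmetric) {c : ℝ} (hc : 0 ≤ c)
    (h : ∀ x, |⟪T x, x⟫| ≤ c * ‖x‖ ^ 2) : ‖T‖ ≤ c := by
  rw [T.norm_eq_iSup_rayleighQuotient hT]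
  refine Real.iSup_le (fun x => ?_) hc
  rw [rayleighQuotient, reApplyInnerSelf_apply, RCLike.re_to_real, abs_div, abs_sq]
  exact div_le_of_le_mul₀ (sq_nonneg _) hc (h x)

end InnerProductSpace

namespace Matrix

section Hadamard

variable {ι 𝕜 : Type*} [RCLike 𝕜]

lemma hadamard_le_hadamard_left {A B C : Matrix ι ι 𝕜} (hA : A.PosSemidef) (h : B ≤ C) :
    A ⊙ B ≤ A ⊙ C := by
  have hsub : A ⊙ C - A ⊙ B = A ⊙ (C - B) := by ext; simp [mul_sub]
  rw [le_iff, hsub]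
  exact hA.hadamard h

lemma hadamard_smul_one [DecidableEq ι] {A : Matrix ι ι 𝕜} (hA : ∀ i, A i i = 1) (a : 𝕜) :
    A ⊙ (a • 1) = a • 1 := by
  rw [hadamard_smul, hadamard_one_eq_one_iff.mpr (funext hA)]

end Hadamard

variable {ι : Type*} [Fintype ι] [DecidableEq ι]

lemma IsHermitian.smul_one_le_of_le_eigenvalues {M : Matrix ι ι ℝ} (hM : M.IsHermitian) {a : ℝ}
    (h : ∀ i, a ≤ hM.eigenvalues i) : a • 1 ≤ M := by
  rw [← Algebra.algebraMap_eq_smul_one, algebraMap_le_iff_le_spectrum (p := IsSelfAdjoint) hM,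
    hM.spectrum_real_eq_range_eigenvalues]
  rintro _ ⟨i, rfl⟩
  exact h i

lemma IsHermitian.le_smul_one_of_eigenvalues_le {M : Matrix ι ι ℝ} (hM : M.IsHermitian) {c : ℝ}
    (h : ∀ i, hM.eigenvalues i ≤ c) : M ≤ c • 1 := by
  rw [← Algebra.algebraMap_eq_smul_one, le_algebraMap_iff_spectrum_le (p := IsSelfAdjoint) hM,
    hM.spectrum_real_eq_range_eigenvalues]
  rintro _ ⟨i, rfl⟩
  exact h i

lemma inner_toEuclideanCLM_le_of_le {M N : Matrix ι ι ℝ} (h : M ≤ N) (x : EuclideanSpace ℝ ι) :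
    ⟪x, toEuclideanCLM (𝕜 := ℝ) M x⟫ ≤ ⟪x, toEuclideanCLM (𝕜 := ℝ) N x⟫ := by
  have := (le_iff.mp h).dotProduct_mulVec_nonneg x.ofLp
  rw [star_trivial, sub_mulVec, dotProduct_sub, sub_nonneg] at this
  simpa only [inner_toEuclideanCLM] using this

lemma inner_toEuclideanCLM_smul_one (a : ℝ) (x : EuclideanSpace ℝ ι) :
    ⟪x, toEuclideanCLM (𝕜 := ℝ) (a • 1 : Matrix ι ι ℝ) x⟫ = a * ‖x‖ ^ 2 := by
  rw [map_smul, map_one, _root_.smul_apply, one_apply_eq_self, inner_smul_right,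
    real_inner_self_eq_norm_sq]

lemma mul_norm_le_norm_toEuclideanCLM {M : Matrix ι ι ℝ} {a : ℝ} (h : a • 1 ≤ M)
    (x : EuclideanSpace ℝ ι) : a * ‖x‖ ≤ ‖toEuclideanCLM (𝕜 := ℝ) M x‖ :=
  ContinuousLinearMap.mul_norm_le_norm_apply
    (fun y => inner_toEuclideanCLM_smul_one a y ▸ inner_toEuclideanCLM_le_of_le h y) x

lemma norm_toEuclideanCLM_le_of_le_smul_one {M : Matrix ι ι ℝ} (hM : 0 ≤ M) {c : ℝ} (hc : 0 ≤ c)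
    (h : M ≤ c • 1) : ‖toEuclideanCLM (𝕜 := ℝ) M‖ ≤ c := by
  refine ContinuousLinearMap.opNorm_le_of_abs_inner_le
    (isSymmetric_toEuclideanLin_iff.mpr hM.posSemidef.isHermitian) hc fun x => ?_
  have hnonneg := inner_toEuclideanCLM_le_of_le hM x
  rw [map_zero, _root_.zero_apply, inner_zero_right] at hnonneg
  rw [real_inner_comm, abs_of_nonneg hnonneg]
  exact inner_toEuclideanCLM_smul_one c x ▸ inner_toEuclideanCLM_le_of_le h x

end Matrix

variable {n : ℕ}

lemma enorm_mulVec_eq_norm_toEuclideanCLM (M : Matrix (Fin n) (Fin n) ℝ) (x : Fin n → ℝ) :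
    _root_.enorm (M *ᵥ x) = ‖toEuclideanCLM (𝕜 := ℝ) M (WithLp.toLp 2 x)‖ := rfl

lemma enorm_mulVec_le_opNorm (M : Matrix (Fin n) (Fin n) ℝ) {x : Fin n → ℝ}
    (hx : _root_.enorm x = 1) : _root_.enorm (M *ᵥ x) ≤ ‖toEuclideanCLM (𝕜 := ℝ) M‖ := by
  simpa [enorm_mulVec_eq_norm_toEuclideanCLM, show ‖WithLp.toLp 2 x‖ = 1 from hx] using
    (toEuclideanCLM (𝕜 := ℝ) M).le_opNorm (WithLp.toLp 2 x)

lemma sMax_nonneg (M : Matrix (Fin n) (Fin n) ℝ) : 0 ≤ sMax M :=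
  Real.iSup_nonneg fun _ => norm_nonneg _

lemma sMax_le_of_le_smul_one {M : Matrix (Fin n) (Fin n) ℝ} (hM : 0 ≤ M) {c : ℝ} (hc : 0 ≤ c)
    (h : M ≤ c • 1) : sMax M ≤ c :=
  Real.iSup_le (fun x => (enorm_mulVec_le_opNorm M x.2).trans
    (norm_toEuclideanCLM_le_of_le_smul_one hM hc h)) hc

-- For `n = 0` the unit sphere is empty and `sMin M = 0`.
lemma le_sMin_of_smul_one_le [NeZero n] {M : Matrix (Fin n) (Fin n) ℝ} {a : ℝ} (h : a • 1 ≤ M) :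
    a ≤ sMin M := by
  have : Nonempty {x : Fin n → ℝ // _root_.enorm x = 1} :=
    ⟨⟨(EuclideanSpace.single 0 1 : EuclideanSpace ℝ (Fin n)).ofLp, by simp [_root_.enorm]⟩⟩
  refine le_ciInf fun x => ?_
  have := mul_norm_le_norm_toEuclideanCLM h (WithLp.toLp 2 x.1)
  rwa [← enorm_mulVec_eq_norm_toEuclideanCLM, show ‖WithLp.toLp 2 x.1‖ = 1 from x.2,
    mul_one] at this

section Eigenvector

variable {M : Matrix (Fin n) (Fin n) ℝ} (hM : M.IsHermitian) (i : Fin n)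

lemma enorm_eigenvectorBasis : _root_.enorm (hM.eigenvectorBasis i).ofLp = 1 :=
  hM.eigenvectorBasis.orthonormal.1 i

lemma enorm_mulVec_eigenvectorBasis :
    _root_.enorm (M *ᵥ (hM.eigenvectorBasis i).ofLp) = |hM.eigenvalues i| := by
  rw [hM.mulVec_eigenvectorBasis, ← WithLp.ofLp_smul]
  change ‖hM.eigenvalues i • hM.eigenvectorBasis i‖ = _
  rw [norm_smul, hM.eigenvectorBasis.orthonormal.1 i, mul_one, Real.norm_eq_abs]

lemma abs_eigenvalues_le_sMax : |hM.eigenvalues i| ≤ sMax M := by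
  have hbdd : BddAbove (Set.range fun x : {x : Fin n → ℝ // _root_.enorm x = 1} =>
      _root_.enorm (M *ᵥ x.1)) :=
    ⟨_, by rintro _ ⟨x, rfl⟩; exact enorm_mulVec_le_opNorm M x.2⟩
  rw [← enorm_mulVec_eigenvectorBasis hM i]
  exact le_ciSup hbdd ⟨_, enorm_eigenvectorBasis hM i⟩

lemma sMin_le_abs_eigenvalues : sMin M ≤ |hM.eigenvalues i| := by
  have hbdd : BddBelow (Set.range fun x : {x : Fin n → ℝ // _root_.enorm x = 1} =>
      _root_.enorm (M *ᵥ x.1)) :=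
    ⟨0, by rintro _ ⟨x, rfl⟩; exact norm_nonneg _⟩
  rw [← enorm_mulVec_eigenvectorBasis hM i]
  exact ciInf_le hbdd ⟨_, enorm_eigenvectorBasis hM i⟩

end Eigenvector

theorem stmt_1_general {n : ℕ} (A B : Matrix (Fin n) (Fin n) ℝ)
    (hA : A.PosDef) (hB : B.PosDef)
    (hAd : ∀ i, A i i = 1) :
    sMax (A.hadamard B) / sMin (A.hadamard B) ≤ sMax B / sMin B := by
  rcases eq_zero_or_neZero n with rfl | _
  · rw [Subsingleton.elim (A.hadamard B) B]
  obtain ⟨iMin, -, hiMin⟩ := Finset.univ.exists_min_image hB.1.eigenvalues Finset.univ_nonempty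
  obtain ⟨iMax, -, hiMax⟩ := Finset.univ.exists_max_image hB.1.eigenvalues Finset.univ_nonempty
  set lam := hB.1.eigenvalues iMin
  set mu := hB.1.eigenvalues iMax
  have hlam : 0 < lam := hB.eigenvalues_pos iMin
  have hmu : 0 ≤ mu := hlam.le.trans (hiMin iMax (Finset.mem_univ _))
  have hBlo : lam • 1 ≤ B :=
    hB.1.smul_one_le_of_le_eigenvalues fun i => hiMin i (Finset.mem_univ i)
  have hBhi : B ≤ mu • 1 :=
    hB.1.le_smul_one_of_eigenvalues_le fun i => hiMax i (Finset.mem_univ i)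
  have hClo : lam • 1 ≤ A ⊙ B :=
    hadamard_smul_one hAd lam ▸ hadamard_le_hadamard_left hA.posSemidef hBlo
  have hChi : A ⊙ B ≤ mu • 1 :=
    hadamard_smul_one hAd mu ▸ hadamard_le_hadamard_left hA.posSemidef hBhi
  have hmax : sMax (A ⊙ B) ≤ sMax B :=
    calc sMax (A ⊙ B) ≤ mu :=
          sMax_le_of_le_smul_one (hA.posSemidef.hadamard hB.posSemidef).nonneg hmu hChi
      _ ≤ sMax B := abs_of_nonneg hmu ▸ abs_eigenvalues_le_sMax hB.1 iMax
  have hmin : sMin B ≤ sMin (A ⊙ B) :=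
    calc sMin B ≤ lam := abs_of_pos hlam ▸ sMin_le_abs_eigenvalues hB.1 iMin
      _ ≤ sMin (A ⊙ B) := le_sMin_of_smul_one_le hClo
  exact div_le_div₀ (sMax_nonneg B) hmax (hlam.trans_le (le_sMin_of_smul_one_le hBlo)) hmin

theorem stmt_1 {n : ℕ} (A B : Matrix (Fin n) (Fin n) ℝ)
    (hA : A.PosDef) (hB : B.PosDef)
    (hAd : ∀ i, A i i = 1) (hBd : ∀ i, B i i = 1) :
    sMax (A.hadamard B) / sMin (A.hadamard B) ≤ sMax B / sMin B :=
  stmt_1_general A B hA hB hAd
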